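/- Let S be a commutative ring, W' and V' free abelian groups of rank n, and ∂^s: Sym_ℤ^s(W') ⊗ Λ_*^ℤ(V') → Sym_ℤ^{s+1}(W') ⊗ Λ_{*-1}^ℤ(V') the model-complex (Koszul) differential. Then ker(∂^s over S) ≅ S ⊗_ℤ ker(∂^s over ℤ); in particular the kernel of the differential Sym_S^s(W) ⊗_S Λ_*^S(V) → Sym_S^{s+1}(W) ⊗_S Λ_{*-1}^S(V) is a free S-module for any commutative ring S. -/

import Mathlib

/-!
Write the model complex in the monomial bases `f^m ⊗ e_T`. Over any commutative ring it has
a combinatorial contracting homotopy `h`: let `j` be the least index occurring in `m` or `T`;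
if `j ∉ T`, move one factor `f_j` of `f^m` into `e_T`, otherwise send the vector to `0`.
The differential does not change the set of indices occurring in `(m, T)`, hence not `j`, and
a direct computation gives `d h + h d = id` away from `f^0 ⊗ e_∅`. Since `d² = 0` and the
image of `d` avoids `f^0`, this yields `d h d = d`, already over `ℤ`.

For any linear map with `D H D = D`, `id - H D` is a retraction of the source onto `ker D`,
so `ker D` is a direct summand and forming it commutes with every base change. Finally the
kernel over `ℤ` is a finitely generated torsion-free abelian group, hence free, and so is its
base change.
-/

/-- Index type for the standard basis of the degree-`p` part of the exterior algebra
on a free module with basis `Fin n`: subsets of `Fin n` of cardinality `p`. -/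
abbrev ExtIdx (n p : ℕ) := {s : Finset (Fin n) // s.card = p}

/-- The Koszul differential `Λ^{p+1}(R^n) → Λ^p(R^n)` associated to `r : Fin n → R`:
the unique `R`-derivation determined by `e_j ↦ r j`, written in the standard basis. -/
noncomputable def koszulD (R : Type*) [CommRing R] {n : ℕ} (r : Fin n → R) (p : ℕ) :
    (ExtIdx n (p + 1) →₀ R) →ₗ[R] (ExtIdx n p →₀ R) :=
  Finsupp.lsum R fun s => LinearMap.toSpanSingleton R _ <|
    ∑ i ∈ s.1.attach, ((-1 : R) ^ ((s.1.filter fun j => j < i.1).card) * r i.1) •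
      Finsupp.single (⟨s.1.erase i.1, by
        simp [Finset.card_erase_of_mem i.2, s.2]⟩ : ExtIdx n p) (1 : R)

/-- Index type for the standard monomial basis of `Sym^s(R^n)`. -/
abbrev MonIdx (n s : ℕ) := {m : Fin n →₀ ℕ // (m.sum fun _ e => e) = s}

/-- Basis index for `Sym^s(W) ⊗ Λ^p(V)` with `V`, `W` free of rank `n`. -/
abbrev MIdx (n s p : ℕ) := MonIdx n s × ExtIdx n p

/-- The differential `∂^s : Sym^s(W) ⊗ Λ^{p+1}(V) → Sym^{s+1}(W) ⊗ Λ^p(V)` of the model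
complex, `∑ᵢ fᵢ ⊗ ∂/∂eᵢ`, written in the standard bases. -/
noncomputable def modelD (S : Type*) [CommRing S] (n s p : ℕ) :
    (MIdx n s (p + 1) →₀ S) →ₗ[S] (MIdx n (s + 1) p →₀ S) :=
  Finsupp.lsum S fun mt => LinearMap.toSpanSingleton S _ <|
    ∑ i ∈ mt.2.1.attach, ((-1 : S) ^ ((mt.2.1.filter fun j => j < i.1).card)) •
      Finsupp.single
        ((⟨mt.1.1 + Finsupp.single i.1 1, by
            rw [Finsupp.sum_add_index' (fun _ => rfl) (fun _ _ _ => rfl), mt.1.2,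
              Finsupp.sum_single_index rfl]⟩ : MonIdx n (s + 1)),
         (⟨mt.2.1.erase i.1, by simp [Finset.card_erase_of_mem i.2, mt.2.2]⟩ : ExtIdx n p)) (1 : S)

namespace LinearMap

open TensorProduct

variable {R A M N : Type*} [CommRing R] [Ring A] [Algebra R A]
  [AddCommGroup M] [Module R M] [AddCommGroup N] [Module R N]
  {D : M →ₗ[R] N} {H : N →ₗ[R] M}

lemma exists_retraction_ker_of_comp_comp_eq (hH : D ∘ₗ H ∘ₗ D = D) :
    ∃ r : M →ₗ[R] ker D,
      r ∘ₗ (ker D).subtype = LinearMap.id ∧ (ker D).subtype ∘ₗ r = LinearMap.id - H ∘ₗ D := by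
  have hq (x : M) : (LinearMap.id - H ∘ₗ D : M →ₗ[R] M) x ∈ ker D := by
    simpa [sub_eq_zero] using (LinearMap.congr_fun hH x).symm
  refine ⟨(LinearMap.id - H ∘ₗ D).codRestrict (ker D) hq, ?_, subtype_comp_codRestrict _ _ _⟩
  ext y
  simp [mem_ker.1 y.2]

variable (A)

lemma injective_baseChange_subtype_ker (hH : D ∘ₗ H ∘ₗ D = D) :
    Function.Injective ((ker D).subtype.baseChange A) := by
  obtain ⟨r, hr, -⟩ := exists_retraction_ker_of_comp_comp_eq hH
  refine Function.LeftInverse.injective (g := r.baseChange A) fun x => ?_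
  rw [← comp_apply, ← baseChange_comp, hr, baseChange_id, id_apply]

lemma range_baseChange_subtype_ker (hH : D ∘ₗ H ∘ₗ D = D) :
    range ((ker D).subtype.baseChange A) = ker (D.baseChange A) := by
  obtain ⟨r, -, hr⟩ := exists_retraction_ker_of_comp_comp_eq hH
  refine le_antisymm ?_ fun x hx => ⟨r.baseChange A x, ?_⟩
  · rintro _ ⟨x, rfl⟩
    rw [mem_ker, ← comp_apply, ← baseChange_comp, D.comp_ker_subtype, baseChange_zero,
      zero_apply]
  · rw [← comp_apply, ← baseChange_comp, hr, baseChange_sub, baseChange_id, baseChange_comp,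
      sub_apply, comp_apply, mem_ker.1 hx, map_zero, sub_zero, id_apply]

noncomputable def kerBaseChangeEquiv (hH : D ∘ₗ H ∘ₗ D = D) :
    A ⊗[R] ker D ≃ₗ[A] ker (D.baseChange A) :=
  (LinearEquiv.ofInjective _ (injective_baseChange_subtype_ker A hH)).trans
    (LinearEquiv.ofEq _ _ (range_baseChange_subtype_ker A hH))

end LinearMap

lemma LinearEquiv.map_ker_eq_ker_of_comp_eq {R M N M' N' : Type*} [Semiring R]
    [AddCommMonoid M] [Module R M] [AddCommMonoid N] [Module R N]
    [AddCommMonoid M'] [Module R M'] [AddCommMonoid N'] [Module R N']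
    (e : M ≃ₗ[R] M') (e' : N ≃ₗ[R] N') {f : M →ₗ[R] N} {g : M' →ₗ[R] N'}
    (h : g ∘ₗ e.toLinearMap = e'.toLinearMap ∘ₗ f) :
    (LinearMap.ker f).map (e : M →ₗ[R] M') = LinearMap.ker g := by
  ext x
  have := LinearMap.congr_fun h (e.symm x)
  simp only [LinearMap.comp_apply, LinearEquiv.coe_coe, LinearEquiv.apply_symm_apply] at this
  rw [Submodule.mem_map_equiv, LinearMap.mem_ker, LinearMap.mem_ker, this,
    LinearEquiv.map_eq_zero_iff]

namespace ModelComplex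

open Finset
open Finsupp (single)

section Ambient

/-- `(m, T)` indexes the basis vector `f^m ⊗ e_T` of `Sym(W) ⊗ Λ(V)`, in every bidegree at once. -/
abbrev Idx (σ : Type*) := (σ →₀ ℕ) × Finset σ

variable {R : Type*} [CommRing R] {σ : Type*} [LinearOrder σ]

variable (R) in
def sign (T : Finset σ) (i : σ) : R := (-1) ^ #{t ∈ T | t < i}

def letters (x : Idx σ) : Finset σ := x.1.support ∪ x.2

variable (R σ)

noncomputable def d : (Idx σ →₀ R) →ₗ[R] (Idx σ →₀ R) :=
  Finsupp.lsum R fun x => LinearMap.toSpanSingleton R _ <|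
    ∑ i ∈ x.2, sign R x.2 i • single (x.1 + single i 1, x.2.erase i) 1

noncomputable def homotopy : (Idx σ →₀ R) →ₗ[R] (Idx σ →₀ R) :=
  Finsupp.lsum R fun x => LinearMap.toSpanSingleton R _ <|
    if hx : (letters x).Nonempty then
      if (letters x).min' hx ∈ x.2 then 0
      else single (x.1 - single ((letters x).min' hx) 1,
        insert ((letters x).min' hx) x.2) 1
    else 0

variable {R σ}

lemma d_single (m : σ →₀ ℕ) (T : Finset σ) :
    d R σ (single (m, T) 1) =
      ∑ i ∈ T, sign R T i • single (m + single i 1, T.erase i) 1 := by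
  simp [d]

lemma homotopy_single {m : σ →₀ ℕ} {T : Finset σ} {j : σ} (hj : IsLeast ↑(letters (m, T)) j) :
    homotopy R σ (single (m, T) 1) =
      if j ∈ T then 0 else single (m - single j 1, insert j T) 1 := by
  have hx : (letters (m, T)).Nonempty := ⟨j, hj.1⟩
  obtain rfl := ((letters (m, T)).isLeast_min' hx).unique hj
  simp [homotopy, hx]

lemma letters_add_single_erase {m : σ →₀ ℕ} {T : Finset σ} {i : σ} (hi : i ∈ T) :
    letters (m + single i 1, T.erase i) = letters (m, T) := by
  ext k
  by_cases hk : k = i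
  · subst hk; simp [letters, hi]
  · simp [letters, hk]

lemma single_le_of_isLeast_letters {m : σ →₀ ℕ} {T : Finset σ} {j : σ}
    (hj : IsLeast ↑(letters (m, T)) j) (hjT : j ∉ T) : single j 1 ≤ m := by
  have hjm := hj.1
  simp only [letters, coe_union, Set.mem_union, mem_coe, Finsupp.mem_support_iff, hjT,
    or_false] at hjm
  exact Finsupp.single_le_iff.2 (Nat.one_le_iff_ne_zero.2 hjm)

lemma sign_eq_one {T : Finset σ} {j : σ} (hj : ∀ t ∈ T, j ≤ t) : sign R T j = 1 := by
  rw [sign, filter_false_of_mem fun t ht => not_lt.2 (hj t ht), card_empty, pow_zero]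

lemma sign_insert {T : Finset σ} {i j : σ} (hj : ∀ t ∈ T, j < t) (hi : i ∈ T) :
    sign R (insert j T) i = -sign R T i := by
  have hjT : j ∉ T := fun h => lt_irrefl j (hj j h)
  rw [sign, sign, filter_insert, if_pos (hj i hi),
    card_insert_of_notMem (by simp [hjT]), pow_succ, mul_neg_one]

lemma card_filter_erase_lt {T : Finset σ} {a : σ} (b : σ) (ha : a ∈ T) :
    #{t ∈ T.erase a | t < b} + (if a < b then 1 else 0) = #{t ∈ T | t < b} := by
  rw [filter_erase]
  split_ifs with hab
  · exact card_erase_add_one (mem_filter.2 ⟨ha, hab⟩)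
  · rw [erase_eq_of_notMem (by simp [hab]), add_zero]

lemma sign_mul_sign_erase {T : Finset σ} {i k : σ} (hi : i ∈ T) (hk : k ∈ T) (hik : i ≠ k) :
    sign R T i * sign R (T.erase i) k = -(sign R T k * sign R (T.erase k) i) := by
  have hki := card_filter_erase_lt k hi
  have hik' := card_filter_erase_lt i hk
  simp only [sign]
  rcases hik.lt_or_gt with h | h
  · rw [if_pos h] at hki; rw [if_neg h.not_gt] at hik'
    rw [← hki, ← hik']; ring
  · rw [if_neg h.not_gt] at hki; rw [if_pos h] at hik'
    rw [← hki, ← hik']; ring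

lemma d_d_single (m : σ →₀ ℕ) (T : Finset σ) :
    d R σ (d R σ (single (m, T) 1)) = 0 := by
  simp only [d_single, map_sum, map_smul, smul_sum, smul_smul]
  rw [sum_sigma']
  refine sum_involution (fun a _ => ⟨a.2, a.1⟩) (fun a ha => ?_) (fun a ha _ => ?_)
    (fun a ha => ?_) (fun _ _ => rfl)
  all_goals obtain ⟨hi, hk⟩ := mem_sigma.1 ha
  · have hik : a.1 ≠ a.2 := (ne_of_mem_erase hk).symm
    rw [add_right_comm, erase_right_comm, ← add_smul,
      sign_mul_sign_erase hi (mem_of_mem_erase hk) hik, neg_add_cancel, zero_smul]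
  · exact fun h => ne_of_mem_erase hk (congrArg Sigma.fst h)
  · exact mem_sigma.2 ⟨mem_of_mem_erase hk, mem_erase.2 ⟨(ne_of_mem_erase hk).symm, hi⟩⟩

lemma d_homotopy_add_homotopy_d {x : Idx σ} (hx : (letters x).Nonempty) :
    d R σ (homotopy R σ (single x 1)) + homotopy R σ (d R σ (single x 1)) =
      single x 1 := by
  obtain ⟨m, T⟩ := x
  set j := (letters (m, T)).min' hx
  have hj : IsLeast ↑(letters (m, T)) j := (letters _).isLeast_min' hx
  have hjT_le : ∀ t ∈ T, j ≤ t := fun t ht => hj.2 (mem_union_right _ ht)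
  have h_d : homotopy R σ (d R σ (single (m, T) 1)) = ∑ i ∈ T, sign R T i •
      if j ∈ T.erase i then 0
      else single (m + single i 1 - single j 1, insert j (T.erase i)) 1 := by
    rw [d_single, map_sum]
    refine sum_congr rfl fun i hi => ?_
    rw [map_smul, homotopy_single (by rwa [letters_add_single_erase hi])]
  rw [homotopy_single hj, h_d]
  by_cases hjT : j ∈ T
  · rw [if_pos hjT, map_zero, zero_add, sum_eq_single_of_mem j hjT]
    · rw [if_neg (notMem_erase j T), sign_eq_one hjT_le, one_smul, add_tsub_cancel_right,
        insert_erase hjT]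
    · intro i _ hij
      rw [if_pos (mem_erase.2 ⟨Ne.symm hij, hjT⟩), smul_zero]
  · have hjm := single_le_of_isLeast_letters hj hjT
    have hjlt : ∀ t ∈ T, j < t := fun t ht => (hjT_le t ht).lt_of_ne (by rintro rfl; exact hjT ht)
    rw [if_neg hjT, d_single, sum_insert hjT,
      sign_eq_one (by simpa using fun t ht => (hjlt t ht).le), one_smul,
      tsub_add_cancel_of_le hjm, erase_insert hjT, add_assoc, ← sum_add_distrib, add_eq_left]
    refine sum_eq_zero fun i hi => ?_
    rw [if_neg (fun h => hjT (mem_of_mem_erase h)), sign_insert hjlt hi, tsub_add_eq_add_tsub hjm,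
      erase_insert_of_ne (hjlt i hi).ne, neg_smul, neg_add_cancel]

lemma d_comp_homotopy_comp_d : d R σ ∘ₗ homotopy R σ ∘ₗ d R σ = d R σ := by
  ext ⟨m, T⟩ : 2
  simp only [LinearMap.comp_apply, Finsupp.lsingle_apply]
  set y : σ → Idx σ := fun i => (m + single i 1, T.erase i)
  have hy : ∀ i ∈ T, d R σ (homotopy R σ (single (y i) 1)) =
      single (y i) 1 - homotopy R σ (d R σ (single (y i) 1)) := fun i hi =>
    eq_sub_of_add_eq <| d_homotopy_add_homotopy_d <| by
      rw [letters_add_single_erase hi]; exact ⟨i, mem_union_right _ hi⟩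
  calc d R σ (homotopy R σ (d R σ (single (m, T) 1)))
      = ∑ i ∈ T, sign R T i • d R σ (homotopy R σ (single (y i) 1)) := by
        rw [d_single]; simp only [map_sum, map_smul]; rfl
    _ = ∑ i ∈ T, sign R T i • (single (y i) 1 - homotopy R σ (d R σ (single (y i) 1))) :=
        sum_congr rfl fun i hi => by rw [hy i hi]
    _ = d R σ (single (m, T) 1) - homotopy R σ (d R σ (d R σ (single (m, T) 1))) := by
        simp only [smul_sub, sum_sub_distrib, d_single (m := m), map_sum, map_smul]; rfl
    _ = d R σ (single (m, T) 1) := by rw [d_d_single, map_zero, sub_zero]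

end Ambient

section Graded

variable {R : Type*} [CommRing R] {n s p : ℕ}

def ofMIdx (x : MIdx n s p) : Idx (Fin n) := (x.1.1, x.2.1)

lemma ofMIdx_injective : Function.Injective (ofMIdx (n := n) (s := s) (p := p)) := by
  rintro ⟨⟨m, _⟩, ⟨T, _⟩⟩ ⟨⟨m', _⟩, ⟨T', _⟩⟩ h
  obtain ⟨rfl, rfl⟩ := Prod.mk.inj h
  rfl

variable (R n s p) in
noncomputable def incl : (MIdx n s p →₀ R) →ₗ[R] (Idx (Fin n) →₀ R) :=
  Finsupp.lmapDomain R R ofMIdx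

lemma incl_injective : Function.Injective (incl R n s p) :=
  Finsupp.mapDomain_injective ofMIdx_injective

lemma incl_single (x : MIdx n s p) (c : R) :
    incl R n s p (single x c) = single (ofMIdx x) c :=
  Finsupp.mapDomain_single

lemma incl_comp_modelD :
    incl R n (s + 1) p ∘ₗ modelD R n s p = d R (Fin n) ∘ₗ incl R n s (p + 1) := by
  ext ⟨⟨m, hm⟩, ⟨T, hT⟩⟩ : 2
  simp only [modelD, LinearMap.coe_comp, Function.comp_apply, Finsupp.lsingle_apply,
    Finsupp.coe_lsum, Finsupp.sum_single_index, LinearMap.toSpanSingleton_apply, zero_smul,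
    one_smul, map_sum, map_smul, incl_single, ofMIdx, d_single]
  exact sum_attach T fun i => sign R T i • single (m + single i 1, T.erase i) 1

lemma homotopy_single_ofMIdx_mem_range (x : MIdx n (s + 1) p) :
    homotopy R (Fin n) (single (ofMIdx x) 1) ∈ LinearMap.range (incl R n s (p + 1)) := by
  obtain ⟨⟨m, hm⟩, ⟨T, hT⟩⟩ := x
  have hm0 : m ≠ 0 := by rintro rfl; simp at hm
  have hx : (letters (m, T)).Nonempty :=
    (Finsupp.support_nonempty_iff.2 hm0).mono subset_union_left
  set j := (letters (m, T)).min' hx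
  have hj : IsLeast ↑(letters (m, T)) j := (letters _).isLeast_min' hx
  rw [ofMIdx, homotopy_single hj]
  split_ifs with hjT
  · exact zero_mem _
  have hjm := single_le_of_isLeast_letters hj hjT
  have hdeg : Finsupp.degree (m - single j 1) = s := by
    have := congrArg Finsupp.degree (tsub_add_cancel_of_le hjm)
    rw [map_add, Finsupp.degree_single] at this
    change Finsupp.degree m = s + 1 at hm
    omega
  exact ⟨single (⟨m - single j 1, hdeg⟩, ⟨insert j T, by
    rw [card_insert_of_notMem hjT, hT]⟩) 1, incl_single _ _⟩

lemma homotopy_incl_mem_range (z : MIdx n (s + 1) p →₀ R) :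
    homotopy R (Fin n) (incl R n (s + 1) p z) ∈ LinearMap.range (incl R n s (p + 1)) := by
  induction z using Finsupp.induction_linear with
  | zero => simp
  | add z w hz hw => simpa only [map_add] using add_mem hz hw
  | single x c =>
    rw [incl_single, ← mul_one c, ← smul_eq_mul, ← Finsupp.smul_single, map_smul]
    exact Submodule.smul_mem _ c (homotopy_single_ofMIdx_mem_range x)

variable (R n s p) in
noncomputable def modelH : (MIdx n (s + 1) p →₀ R) →ₗ[R] (MIdx n s (p + 1) →₀ R) :=
  Finsupp.lcomapDomain ofMIdx ofMIdx_injective ∘ₗ homotopy R (Fin n) ∘ₗ incl R n (s + 1) p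

lemma incl_modelH (z : MIdx n (s + 1) p →₀ R) :
    incl R n s (p + 1) (modelH R n s p z) = homotopy R (Fin n) (incl R n (s + 1) p z) := by
  obtain ⟨y, hy⟩ := homotopy_incl_mem_range z
  rw [modelH, LinearMap.comp_apply, LinearMap.comp_apply, ← hy]
  simp only [incl, Finsupp.lmapDomain_apply, Finsupp.lcomapDomain_apply]
  rw [Finsupp.comapDomain_mapDomain _ ofMIdx_injective]

theorem modelD_comp_modelH_comp_modelD :
    modelD R n s p ∘ₗ modelH R n s p ∘ₗ modelD R n s p = modelD R n s p := by
  refine LinearMap.ext fun z => incl_injective ?_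
  have hD := LinearMap.congr_fun (incl_comp_modelD (R := R) (n := n) (s := s) (p := p))
  simp only [LinearMap.comp_apply] at hD ⊢
  rw [hD, incl_modelH, hD, ← LinearMap.comp_apply (homotopy R (Fin n)),
    ← LinearMap.comp_apply (d R (Fin n)), d_comp_homotopy_comp_d]

end Graded

end ModelComplex

lemma modelD_comp_finsuppScalarRight (S : Type*) [CommRing S] (n s p : ℕ) :
    modelD S n s p ∘ₗ (TensorProduct.finsuppScalarRight ℤ S S (MIdx n s (p + 1))).toLinearMap =
      (TensorProduct.finsuppScalarRight ℤ S S (MIdx n (s + 1) p)).toLinearMap ∘ₗ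
        (modelD ℤ n s p).baseChange S := by
  ext x : 4
  simp only [modelD, TensorProduct.AlgebraTensorModule.curry_apply, LinearMap.restrictScalars_comp,
    LinearMap.coe_comp, Function.comp_apply, Finsupp.lsingle_apply, TensorProduct.curry_apply,
    LinearMap.coe_restrictScalars, Finsupp.coe_lsum, LinearEquiv.coe_coe,
    TensorProduct.finsuppScalarRight_apply_tmul, Finsupp.sum_single_index, zero_smul, one_smul,
    LinearMap.toSpanSingleton_apply, LinearMap.baseChange_tmul]
  rw [← Finsupp.sum_finsetSum_index (by simp) (by simp [Finsupp.single_add])]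
  simp

instance (n s : ℕ) : Finite (MonIdx n s) :=
  (Finsupp.finite_of_degree_eq s).to_subtype

universe u

theorem model_differential_kernel_base_change_and_free
    (S : Type u) [CommRing S] (n s p : ℕ) :
    -- base change: `ker(∂^s over S) ≅ S ⊗_ℤ ker(∂^s over ℤ)`
    Nonempty ((LinearMap.ker (modelD S n s p)) ≃ₗ[S]
      (TensorProduct ℤ S (LinearMap.ker (modelD ℤ n s p)))) ∧
    -- freeness of the kernel over `S`
    ∃ ι : Type u, Nonempty ((LinearMap.ker (modelD S n s p)) ≃ₗ[S] (ι →₀ S)) := by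
  have hker := (TensorProduct.finsuppScalarRight ℤ S S _).map_ker_eq_ker_of_comp_eq
    (TensorProduct.finsuppScalarRight ℤ S S _) (modelD_comp_finsuppScalarRight S n s p)
  let e := (LinearMap.kerBaseChangeEquiv S ModelComplex.modelD_comp_modelH_comp_modelD).trans
    (LinearEquiv.ofSubmodules _ _ _ hker)
  have : Module.Free S (LinearMap.ker (modelD S n s p)) := .of_equiv e
  exact ⟨⟨e.symm⟩, _, ⟨(Module.Free.chooseBasis S _).repr⟩⟩
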